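/- Let W ⊆ V be an isotropic subspace of dimension r ≥ 1 and W' ⊂ W a subspace of dimension r−1. Choose a basis (w₁,…,w_r) of W such that (w₁,…,w_{r−1}) is a basis of W', and set ω' = ι(w₁)⋯ι(w_{r−1}) and ω = ω'·ι(w_r) = ι(w₁)⋯ι(w_r). Then right multiplication by ι(w_r) maps the left Clifford ideal Cl(q)·ω' onto Cl(q)·ω, and its kernel on Cl(q)·ω' is exactly Cl(q)·ω; that is, {x ∈ Cl(q)·ω' : x·ι(w_r) = 0} = Cl(q)·ω, so there is a short exact sequence 0 → Cl(q)·ω → Cl(q)·ω' → Cl(q)·ω → 0 in which the second map is right multiplication by ι(w_r). (This is the fiberwise form of Lemma 2.5 for left Clifford ideals.) -/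

import Mathlib

/-!
Write `e = ι w_r`. Since `e * e = Q w_r = 0` and `e` anticommutes with each `ι w_i` (vectors of an
isotropic subspace are pairwise orthogonal), `Cl·ω = Cl·ω' e` lies in `Cl·ω'` and is killed by
right multiplication by `e`. Conversely, take a functional `d` with `d w_r = 1` vanishing on
`w_1, …, w_{r-1}`. Right contraction by `d` is a twisted derivation, so `y * e = 0` forces
`y = (y ⌊ d) * e`, and for `y = x * ω'` it gives `y ⌊ d = ± (x ⌊ d) * ω'`; hence `y ∈ Cl·ω`.
-/

open CliffordAlgebra

theorem LinearIndependent.exists_dual_apply_eq_one_and_apply_ne_eq_zero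
    {ι K V : Type*} [Field K] [AddCommGroup V] [Module K V] {v : ι → V}
    (hv : LinearIndependent K v) (i : ι) :
    ∃ f : Module.Dual K V, f (v i) = 1 ∧ ∀ j ≠ i, f (v j) = 0 := by
  obtain ⟨g, hg⟩ := (Finsupp.linearCombination K v).exists_leftInverse_of_injective
    (LinearMap.ker_eq_bot.mpr hv)
  have hgv : ∀ j, g (v j) = Finsupp.single j 1 := fun j => by
    simpa using LinearMap.congr_fun hg (Finsupp.single j 1)
  refine ⟨Finsupp.lapply i ∘ₗ g, by simp [hgv], fun j hj => ?_⟩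
  simp [hgv, hj]

theorem Submodule.span_setOf_eq_mul_eq_range_mulRight {R A : Type*} [CommSemiring R]
    [Semiring A] [Algebra R A] (a : A) :
    span R {y | ∃ x : A, y = x * a} = LinearMap.range (LinearMap.mulRight R a) := by
  rw [← span_eq (LinearMap.range (LinearMap.mulRight R a))]
  congr 1
  ext y
  simp [eq_comm]

theorem QuadraticMap.isOrtho_of_mem_of_forall_mem_eq_zero {R M N : Type*} [CommRing R]
    [AddCommGroup M] [Module R M] [AddCommGroup N] [Module R N] {Q : QuadraticMap R M N}
    {W : Submodule R M} (hW : ∀ v ∈ W, Q v = 0) {u v : M} (hu : u ∈ W) (hv : v ∈ W) :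
    Q.IsOrtho u v := by
  rw [isOrtho_def, hW _ hu, hW _ hv, hW _ (W.add_mem hu hv), add_zero]

namespace CliffordAlgebra

variable {R M : Type*} [CommRing R] [AddCommGroup M] [Module R M] {Q : QuadraticForm R M}

theorem list_prod_map_ι_mul_ι_of_isOrtho {v : M} :
    ∀ {L : List M}, (∀ u ∈ L, Q.IsOrtho u v) →
      (L.map (ι Q)).prod * ι Q v = (-1 : R) ^ L.length • (ι Q v * (L.map (ι Q)).prod)
  | [], _ => by simp
  | u :: L, h => by
    rw [List.map_cons, List.prod_cons, List.length_cons, pow_succ, mul_assoc,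
      list_prod_map_ι_mul_ι_of_isOrtho fun x hx => h x (List.mem_cons_of_mem _ hx),
      mul_smul_comm, ← mul_assoc, ι_mul_ι_comm_of_isOrtho (h u List.mem_cons_self)]
    simp [mul_assoc]

theorem contractRight_mul_list_prod_map_ι (d : Module.Dual R M) (b : CliffordAlgebra Q)
    {L : List M} (h : ∀ u ∈ L, d u = 0) :
    contractRight (b * (L.map (ι Q)).prod) d
      = (-1 : R) ^ L.length • (contractRight b d * (L.map (ι Q)).prod) := by
  induction L using List.reverseRecOn generalizing b with
  | nil => simp
  | append_singleton L a ih =>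
    simp only [List.map_append, List.map_singleton, List.prod_append, List.prod_singleton,
      List.length_append, List.length_singleton, ← mul_assoc]
    rw [contractRight_mul_ι, ih _ fun u hu => h u (List.mem_append_left _ hu), h a (by simp),
      zero_smul, zero_sub, pow_succ, mul_neg_one, neg_smul, smul_mul_assoc]

theorem eq_contractRight_mul_ι_of_mul_ι_eq_zero {d : Module.Dual R M} {v : M} (hd : d v = 1)
    {y : CliffordAlgebra Q} (hy : y * ι Q v = 0) : y = contractRight y d * ι Q v := by
  have h := contractRight_mul_ι v y (d := d)
  rw [hy, map_zero, LinearMap.zero_apply, hd, one_smul] at h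
  exact sub_eq_zero.mp h.symm

theorem range_mulRight_list_prod_inf_ker_mulRight_ι {L : List M} {v : M} (hv : Q v = 0)
    (hL : ∀ u ∈ L, Q.IsOrtho u v) {d : Module.Dual R M} (hdv : d v = 1)
    (hdL : ∀ u ∈ L, d u = 0) :
    LinearMap.range (LinearMap.mulRight R (L.map (ι Q)).prod) ⊓
        LinearMap.ker (LinearMap.mulRight R (ι Q v)) =
      LinearMap.range (LinearMap.mulRight R ((L.map (ι Q)).prod * ι Q v)) := by
  apply le_antisymm
  · rintro _ ⟨⟨x, rfl⟩, hy⟩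
    rw [SetLike.mem_coe, LinearMap.mem_ker, LinearMap.mulRight_apply] at hy
    refine ⟨(-1 : R) ^ L.length • contractRight x d, ?_⟩
    calc (-1 : R) ^ L.length • contractRight x d * ((L.map (ι Q)).prod * ι Q v)
        = contractRight (x * (L.map (ι Q)).prod) d * ι Q v := by
          rw [contractRight_mul_list_prod_map_ι d x hdL, smul_mul_assoc, smul_mul_assoc,
            mul_assoc]
      _ = x * (L.map (ι Q)).prod := (eq_contractRight_mul_ι_of_mul_ι_eq_zero hdv hy).symm
  · rintro _ ⟨x, rfl⟩
    refine ⟨⟨(-1 : R) ^ L.length • (x * ι Q v), ?_⟩, ?_⟩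
    · rw [LinearMap.mulRight_apply, LinearMap.mulRight_apply,
        list_prod_map_ι_mul_ι_of_isOrtho hL, smul_mul_assoc, mul_smul_comm, mul_assoc]
    · simp [mul_assoc, ι_sq_scalar, hv]

end CliffordAlgebra

theorem clifford_left_ideal_ses_of_corank_one_general
    {k V : Type*} [Field k]
    [AddCommGroup V] [Module k V]
    (Q : QuadraticForm k V) (W : Submodule k V)
    (hiso : ∀ v ∈ W, Q v = 0)
    (r : ℕ) (w : Fin (r + 1) → V)
    (hli : LinearIndependent k w)
    (hspan : Submodule.span k (Set.range w) = W)
    (ω' ω : CliffordAlgebra Q)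
    (hω' : ω' = (List.ofFn fun i : Fin r => ι Q (w i.castSucc)).prod)
    (hω : ω = ω' * ι Q (w (Fin.last r))) :
    Submodule.map (LinearMap.mulRight k (ι Q (w (Fin.last r))))
        (Submodule.span k {y | ∃ x : CliffordAlgebra Q, y = x * ω'}) =
      Submodule.span k {y | ∃ x : CliffordAlgebra Q, y = x * ω} ∧
    Submodule.span k {y | ∃ x : CliffordAlgebra Q, y = x * ω'} ⊓
        LinearMap.ker (LinearMap.mulRight k (ι Q (w (Fin.last r)))) =
      Submodule.span k {y | ∃ x : CliffordAlgebra Q, y = x * ω} := by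
  simp only [Submodule.span_setOf_eq_mul_eq_range_mulRight]
  constructor
  · rw [← LinearMap.range_comp, ← LinearMap.mulRight_mul, ← hω]
  have hwW : ∀ i, w i ∈ W := fun i => hspan ▸ Submodule.subset_span ⟨i, rfl⟩
  obtain ⟨d, hd_last, hd_ne⟩ := hli.exists_dual_apply_eq_one_and_apply_ne_eq_zero (Fin.last r)
  have hω'_map : (List.ofFn fun i : Fin r => ι Q (w i.castSucc)) =
      (List.ofFn fun i : Fin r => w i.castSucc).map (ι Q) := by
    rw [List.map_ofFn]; rfl
  rw [hω, hω', hω'_map]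
  refine range_mulRight_list_prod_inf_ker_mulRight_ι (hiso _ (hwW _)) ?_ hd_last ?_ <;>
    simp only [List.forall_mem_ofFn_iff]
  · exact fun i => QuadraticMap.isOrtho_of_mem_of_forall_mem_eq_zero hiso (hwW _) (hwW _)
  · exact fun i => hd_ne _ (Fin.castSucc_lt_last i).ne

/-- Let `W` be an isotropic subspace with basis `w₁, …, w_{r+1}` and let
`W'` be the span of `w₁, …, w_r`. With `ω' = ι w₁ ⋯ ι w_r` and `ω = ω' · ι w_{r+1}`,
right multiplication by `ι w_{r+1}` maps the left Clifford ideal `Cl(q)·ω'` onto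
`Cl(q)·ω`, and its kernel on `Cl(q)·ω'` is exactly `Cl(q)·ω`; i.e. there is a short
exact sequence `0 → Cl(q)·ω → Cl(q)·ω' → Cl(q)·ω → 0` whose second map is right
multiplication by `ι w_{r+1}`. -/
theorem clifford_left_ideal_ses_of_corank_one
    {k V : Type*} [Field k] [Invertible (2 : k)]
    [AddCommGroup V] [Module k V] [FiniteDimensional k V]
    (Q : QuadraticForm k V) (W W' : Submodule k V)
    (hiso : ∀ v ∈ W, Q v = 0)
    (r : ℕ) (w : Fin (r + 1) → V)
    (hli : LinearIndependent k w)
    (hspan : Submodule.span k (Set.range w) = W)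
    (hspan' : Submodule.span k (Set.range fun i : Fin r => w i.castSucc) = W')
    (ω' ω : CliffordAlgebra Q)
    (hω' : ω' = (List.ofFn fun i : Fin r => ι Q (w i.castSucc)).prod)
    (hω : ω = ω' * ι Q (w (Fin.last r))) :
    Submodule.map (LinearMap.mulRight k (ι Q (w (Fin.last r))))
        (Submodule.span k {y | ∃ x : CliffordAlgebra Q, y = x * ω'}) =
      Submodule.span k {y | ∃ x : CliffordAlgebra Q, y = x * ω} ∧
    Submodule.span k {y | ∃ x : CliffordAlgebra Q, y = x * ω'} ⊓
        LinearMap.ker (LinearMap.mulRight k (ι Q (w (Fin.last r)))) =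
      Submodule.span k {y | ∃ x : CliffordAlgebra Q, y = x * ω} :=
  clifford_left_ideal_ses_of_corank_one_general Q W hiso r w hli hspan ω' ω hω' hω
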